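/- Let 1 ≤ i ≤ n−1 and set B_{i,i+1} := O(V_i) ⊗_{O(V_i)^{s_i}} O(V_i ∩ V_{i+1}) ⊗_{O(V_{i+1})^{s_{i+1}}} O(V_{i+1}), where the middle factor is an O(V_i)^{s_i}- and O(V_{i+1})^{s_{i+1}}-module via restriction. Then B_{i,i+1} is free of rank 2 as a left O(V_i)-module and free of rank 2 as a right O(V_{i+1})-module. In particular, regarding B_{i,i+1} as an (O(Z),O(Z))-bimodule via the restrictions O(Z) → O(V_i) and O(Z) → O(V_{i+1}), its left annihilator in O(Z) is the kernel of O(Z) → O(V_i) and its right annihilator is the kernel of O(Z) → O(V_{i+1}). -/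

import Mathlib

/-! Basic setup: type A_n geometric representation, Weyl lines, combinatorics. -/

set_option linter.unusedSectionVars false
set_option synthInstance.maxHeartbeats 1000000
set_option maxHeartbeats 1000000

namespace TLpaper

/-- A permutation is a transposition. -/
def IsTransposition {α : Type} [DecidableEq α] (σ : Equiv.Perm α) : Prop :=
  ∃ a b, a ≠ b ∧ σ = Equiv.swap a b

variable (k : Type) [Field k] [CharZero k] (n : ℕ)

/-- The reflecting hyperplane of a permutation `t` inside `V = {x | ∑ x i = 0}`:
the set of points of `V` fixed by permuting the coordinates by `t`.  For a
transposition `t = (a b)` this is `{x ∈ V | x a = x b}`. -/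
def Hyp (t : Equiv.Perm (Fin (n + 1))) : Set (Fin (n + 1) → k) :=
  {x | (∑ i, x i) = 0 ∧ ∀ i, x (t i) = x i}

/-- A Weyl line: a one-dimensional linear subspace of `V` which is an
intersection of a (possibly empty) family of reflecting hyperplanes. -/
def IsWeylLine (L : Set (Fin (n + 1) → k)) : Prop :=
  (∃ v : Fin (n + 1) → k, v ≠ 0 ∧ L = Set.range fun c : k => c • v) ∧
  ∃ T : Set (Equiv.Perm (Fin (n + 1))),
    (∀ t ∈ T, IsTransposition t) ∧
    L = {x | (∑ i, x i) = 0} ∩ ⋂ t ∈ T, Hyp k n t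

/-- `Z`: the union of all Weyl lines. -/
def ZZ : Set (Fin (n + 1) → k) := ⋃ L ∈ {L | IsWeylLine k n L}, L

/-- `V_t`: the union of all Weyl lines transverse to `t` (i.e. not contained in `H_t`). -/
def Vt (t : Equiv.Perm (Fin (n + 1))) : Set (Fin (n + 1) → k) :=
  ⋃ L ∈ {L | IsWeylLine k n L ∧ ¬L ⊆ Hyp k n t}, L

open Fin.NatCast in
/-- The simple transposition `s_i = (i, i+1)` (0-indexed: it swaps coordinates
`i` and `i+1` of `Fin (n+1)`, for `i < n`). -/
def simple (i : ℕ) : Equiv.Perm (Fin (n + 1)) :=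
  Equiv.swap (i : Fin (n + 1)) ((i + 1 : ℕ) : Fin (n + 1))

/-- `V_i := V_{s_i}`. -/
def Vi (i : ℕ) : Set (Fin (n + 1) → k) := Vt k n (simple n i)

/-- The action of a permutation on a subset of `k^{n+1}` (permuting coordinates). -/
def permSet (σ : Equiv.Perm (Fin (n + 1))) (W : Set (Fin (n + 1) → k)) :
    Set (Fin (n + 1) → k) :=
  (fun x => x ∘ σ) '' W

/-- `i · W := V_i ∩ (W ∪ s_i (W))`. -/
def dotAct (i : ℕ) (W : Set (Fin (n + 1) → k)) : Set (Fin (n + 1) → k) :=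
  Vi k n i ∩ (W ∪ permSet k n (simple n i) W)

/-- The set `W_{i_1 ⋯ i_m}` associated with a sequence of indices. -/
def seqSet : List ℕ → Set (Fin (n + 1) → k)
  | [] => ZZ k n
  | [i] => Vi k n i
  | i :: j :: l => dotAct k n i (seqSet (j :: l))

/-- Membership in the family `𝒱_n`. -/
def memVn (W : Set (Fin (n + 1) → k)) : Prop :=
  ∃ l : List ℕ, l ≠ [] ∧ (∀ i ∈ l, i < n) ∧ W = seqSet k n l

/-- A set of pairwise commuting transpositions. -/
def CommTranspositions (Q : Set (Equiv.Perm (Fin (n + 1)))) : Prop :=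
  (∀ t ∈ Q, IsTransposition t) ∧ ∀ t ∈ Q, ∀ t' ∈ Q, t * t' = t' * t


/-! Coordinate rings of subvarieties of `k^{n+1}`. -/

noncomputable section

/-- The ring `O(X)` of regular functions on `X`: the quotient of the polynomial ring
`k[X_0, …, X_n]` by the vanishing ideal of `X`. -/
def O (X : Set (Fin (n + 1) → k)) : Type :=
  MvPolynomial (Fin (n + 1)) k ⧸ MvPolynomial.vanishingIdeal k X

instance (X : Set (Fin (n + 1) → k)) : CommRing (O k n X) :=
  inferInstanceAs (CommRing (MvPolynomial (Fin (n + 1)) k ⧸ MvPolynomial.vanishingIdeal k X))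

theorem vanishingIdeal_anti {X Y : Set (Fin (n + 1) → k)} (h : X ⊆ Y) :
    MvPolynomial.vanishingIdeal k Y ≤ MvPolynomial.vanishingIdeal k X := fun p hp => by
  rw [MvPolynomial.mem_vanishingIdeal_iff] at hp ⊢
  exact fun x hx => hp x (h hx)

/-- The (surjective) restriction homomorphism `O(Y) → O(X)` for `X ⊆ Y`. -/
def res {X Y : Set (Fin (n + 1) → k)} (h : X ⊆ Y) : O k n Y →+* O k n X :=
  Ideal.Quotient.factor (vanishingIdeal_anti k n h)

open Classical in
/-- The ring endomorphism of `O(X)` induced by a permutation `σ` of the coordinates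
(when `X` is `σ`-stable; the definition branches on this (true, in our uses)
stability condition to be total). -/
def permO (σ : Equiv.Perm (Fin (n + 1))) (X : Set (Fin (n + 1) → k)) :
    O k n X →+* O k n X :=
  if h : ∀ x ∈ X, x ∘ σ ∈ X then
    Ideal.Quotient.lift _
      ((Ideal.Quotient.mk _).comp (MvPolynomial.rename (R := k) ⇑σ).toRingHom)
      (fun p hp => by
        have hmem : (MvPolynomial.rename (R := k) ⇑σ) p ∈
            MvPolynomial.vanishingIdeal k X := by
          rw [MvPolynomial.mem_vanishingIdeal_iff]
          intro x hx
          rw [MvPolynomial.aeval_rename]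
          exact (MvPolynomial.mem_vanishingIdeal_iff.1 hp) _ (h x hx)
        exact Ideal.Quotient.eq_zero_iff_mem.2 hmem)
  else RingHom.id _

/-- The fixed subalgebra `O(V_i)^{s_i}` of `O(V_i)` under the automorphism induced
by the simple transposition `s_i`. -/
def fixedO (i : ℕ) : Subring (O k n (Vi k n i)) :=
  RingHom.eqLocus (permO k n (simple n i) (Vi k n i)) (RingHom.id _)

open Fin.NatCast in
/-- The image `f_i` of `X_i − X_{i+1}` in the coordinate ring `O(X)`. -/
def fbar (X : Set (Fin (n + 1) → k)) (i : ℕ) : O k n X :=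
  Ideal.Quotient.mk _
    (MvPolynomial.X (i : Fin (n + 1)) - MvPolynomial.X ((i + 1 : ℕ) : Fin (n + 1)))

theorem Vt_subset_ZZ (t : Equiv.Perm (Fin (n + 1))) : Vt k n t ⊆ ZZ k n := by
  refine Set.iUnion₂_subset fun L hL => ?_
  exact Set.subset_iUnion₂ (s := fun L _ => L) L hL.1

theorem Vi_subset_ZZ (i : ℕ) : Vi k n i ⊆ ZZ k n := Vt_subset_ZZ k n _

theorem seqSet_subset_ZZ : ∀ l : List ℕ, seqSet k n l ⊆ ZZ k n
  | [] => subset_rfl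
  | [_] => Vi_subset_ZZ k n _
  | _ :: _ :: _ => Set.inter_subset_left.trans (Vi_subset_ZZ k n _)

end

open scoped TensorProduct

/-- `S` is free of rank `m` as a module over `R`, the action being through the ring
homomorphism `f : R →+* S` (i.e. `r • x := f r * x`): there is a basis of size `m`. -/
def FreeRankVia {R S : Type} [CommRing R] [CommRing S] (f : R →+* S) (m : ℕ) : Prop :=
  ∃ b : Fin m → S, ∀ x : S, ∃! c : Fin m → R, x = ∑ j, f (c j) * b j

end TLpaper

/-!
For a transposition `t = (a b)`, the set `V_t` is `t`-stable and is a union of lines through the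
origin on which `x_a ≠ x_b` away from `0`. So `f = x_a - x_b` is a non-zero-divisor of `O(V_t)`
negated by `t`; as `f` divides every `g - t g`, each function is uniquely `u + w f` with `u, w`
invariant, i.e. `O(V_t)` is free over `O(V_t)^t` with basis `1, f`.

A point of a Weyl line takes at most two coordinate values, so `x_a = x_c` on
`V_(a b) ∩ V_(b c)`, and each point of `V_(a b)` or its image under `(a b)` lies in this
intersection. Hence restriction identifies both `O(V_i)^{s_i}` and `O(V_{i+1})^{s_{i+1}}` with
the middle factor `O(V_i ∩ V_{i+1})`, so `B_{i,i+1}` is a base change of `O(V_{i+1})` to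
`O(V_i)` and, symmetrically, of `O(V_i)` to `O(V_{i+1})`. Freeness of positive rank makes both
structure maps injective, which gives the annihilators.
-/

namespace TLpaper

open Equiv MvPolynomial
open scoped TensorProduct

section FreeRankVia

variable {R R' S S' : Type} [CommRing R] [CommRing R'] [CommRing S] [CommRing S']

theorem FreeRankVia.comp_bijective {f : R →+* S} {m : ℕ} (hf : FreeRankVia f m) {e : R' →+* R}
    (he : Function.Bijective e) : FreeRankVia (f.comp e) m := by
  obtain ⟨b, hb⟩ := hf
  refine ⟨b, fun x => ?_⟩
  obtain ⟨c, hc, huniq⟩ := hb x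
  let e' := RingEquiv.ofBijective e he
  have he' : ∀ r, e (e'.symm r) = r := e'.apply_symm_apply
  refine ⟨e'.symm ∘ c, by simpa [he'] using hc, fun c' hc' => funext fun j => he.1 ?_⟩
  simpa [he'] using congrFun (huniq (e ∘ c') hc') j

theorem FreeRankVia.bijective_comp {f : R →+* S} {m : ℕ} (hf : FreeRankVia f m) {h : S →+* S'}
    (hh : Function.Bijective h) : FreeRankVia (h.comp f) m := by
  obtain ⟨b, hb⟩ := hf
  refine ⟨h ∘ b, fun x => ?_⟩
  obtain ⟨y, rfl⟩ := hh.2 x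
  obtain ⟨c, hc, huniq⟩ := hb y
  refine ⟨c, by simp [hc, map_sum], fun c' hc' => huniq c' (hh.1 ?_)⟩
  simpa [map_sum] using hc'

theorem FreeRankVia.eq_zero_of_forall_mul_eq_zero {f : R →+* S} {m : ℕ} (hf : FreeRankVia f m)
    (hm : 0 < m) {r : R} (hr : ∀ x, f r * x = 0) : r = 0 := by
  obtain ⟨b, hb⟩ := hf
  have h₀ : (0 : S) = ∑ j, f ((0 : Fin m → R) j) * b j := by simp
  have hr₀ : (0 : S) = ∑ j, f ((Pi.single ⟨0, hm⟩ r : Fin m → R) j) * b j := by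
    simp [Pi.single_apply, apply_ite f, ite_mul, hr]
  simpa using congrFun ((hb 0).unique hr₀ h₀) ⟨0, hm⟩

theorem FreeRankVia.setOf_forall_mul_eq_zero {A : Type} [CommRing A] {f : R →+* S} {m : ℕ}
    (hf : FreeRankVia f m) (hm : 0 < m) (g : A →+* R) :
    {a : A | ∀ x : S, f (g a) * x = 0} = {a : A | g a = 0} := by
  ext a
  refine ⟨fun ha => hf.eq_zero_of_forall_mul_eq_zero hm ha, fun ha x => ?_⟩
  simp [show g a = 0 from ha]

theorem freeRankVia_algebraMap_iff [Algebra R S] {m : ℕ} :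
    FreeRankVia (algebraMap R S) m ↔ Nonempty (Module.Basis (Fin m) R S) := by
  constructor
  · rintro ⟨b, hb⟩
    have hb' : ∀ x, ∃! c : Fin m → R, Fintype.linearCombination R b c = x := fun x => by
      simpa [Fintype.linearCombination_apply, Algebra.smul_def, eq_comm] using hb x
    have hbij : Function.Bijective (Fintype.linearCombination R b) :=
      ⟨fun c c' h => (hb' _).unique rfl h.symm, fun x => (hb' x).exists⟩
    exact ⟨Module.Basis.ofEquivFun (LinearEquiv.ofBijective _ hbij).symm⟩
  · rintro ⟨b⟩
    refine ⟨b, fun x => ⟨b.equivFun x, ?_, fun c hc => ?_⟩⟩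
    · simpa [Algebra.smul_def] using (b.sum_equivFun x).symm
    · simp_rw [← Algebra.smul_def, ← b.equivFun_symm_apply] at hc
      rw [hc, LinearEquiv.apply_symm_apply]

end FreeRankVia

section TensorProduct

variable {R R' A S M : Type} [CommRing R] [CommRing R'] [CommRing A] [CommRing S] [CommRing M]
  [Algebra R A] [Algebra R S] [Algebra R M] {m : ℕ}

theorem FreeRankVia.includeLeftRingHom (h : FreeRankVia (algebraMap R S) m) :
    FreeRankVia (Algebra.TensorProduct.includeLeftRingHom : A →+* A ⊗[R] S) m :=
  have ⟨b⟩ := freeRankVia_algebraMap_iff.1 h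
  freeRankVia_algebraMap_iff.2 ⟨Algebra.TensorProduct.basis A b⟩

theorem FreeRankVia.includeRight (h : FreeRankVia (algebraMap R A) m) :
    FreeRankVia (Algebra.TensorProduct.includeRight.toRingHom : S →+* A ⊗[R] S) m := by
  have := (h.includeLeftRingHom (A := S)).bijective_comp
    (Algebra.TensorProduct.comm R S A).bijective
  convert this using 1
  ext s
  rfl

theorem FreeRankVia.includeRight_comp (hM : Function.Bijective (algebraMap R M))
    {ψ : R' →+* M} (hψ : Function.Bijective ψ) (h : FreeRankVia (algebraMap R S) m) :
    FreeRankVia ((Algebra.TensorProduct.includeRight.toRingHom : M →+* S ⊗[R] M).comp ψ) m := by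
  let φ := RingEquiv.ofBijective (algebraMap R M) hM
  have := (h.bijective_comp (Algebra.TensorProduct.includeLeft_bijective (S := R) hM))
    |>.comp_bijective (e := φ.symm.toRingHom.comp ψ) (φ.symm.bijective.comp hψ)
  convert this using 1
  ext c
  change 1 ⊗ₜ ψ c = algebraMap R S (φ.symm (ψ c)) ⊗ₜ 1
  rw [Algebra.TensorProduct.tmul_one_eq_one_tmul]
  exact congrArg _ (φ.apply_symm_apply (ψ c)).symm

theorem freeRankVia_includeLeft_includeRight {S' : Type} [CommRing S'] [Algebra R' M]
    [Algebra R' S'] [Algebra R' (S ⊗[R] M)]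
    (hR' : algebraMap R' (S ⊗[R] M) =
      (Algebra.TensorProduct.includeRight.toRingHom : M →+* S ⊗[R] M).comp (algebraMap R' M))
    (hM : Function.Bijective (algebraMap R M)) (hM' : Function.Bijective (algebraMap R' M))
    (hS : FreeRankVia (algebraMap R S) m) (hS' : FreeRankVia (algebraMap R' S') m) :
    FreeRankVia ((Algebra.TensorProduct.includeLeftRingHom :
        S ⊗[R] M →+* (S ⊗[R] M) ⊗[R'] S').comp Algebra.TensorProduct.includeLeftRingHom) m ∧
      FreeRankVia (Algebra.TensorProduct.includeRight.toRingHom :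
        S' →+* (S ⊗[R] M) ⊗[R'] S') m :=
  ⟨hS'.includeLeftRingHom.comp_bijective (Algebra.TensorProduct.includeLeft_bijective (S := R) hM),
    (hR' ▸ hS.includeRight_comp hM hM').includeRight⟩

end TensorProduct

section Involution

variable {A : Type} [CommRing A] {σ : A →+* A} {f : A}

theorem eq_zero_of_add_mul_eq_zero (h2 : IsUnit (2 : A)) (hσf : σ f = -f)
    (hf : IsLeftRegular f) {u w : A} (hu : σ u = u) (hw : σ w = w) (h : u + w * f = 0) :
    u = 0 ∧ w = 0 := by
  have hσ : u - w * f = 0 := by simpa [hu, hw, hσf, sub_eq_add_neg] using congrArg σ h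
  have hu0 : u = 0 := h2.mul_right_injective (by linear_combination h + hσ)
  refine ⟨hu0, hf (?_ : f * w = f * 0)⟩
  linear_combination h - hu0

theorem exists_add_mul_eq (hσ : ∀ a, σ (σ a) = a) (h2 : IsUnit (2 : A)) (hσf : σ f = -f)
    (hf : IsLeftRegular f) (hdvd : ∀ a, f ∣ a - σ a) (x : A) :
    ∃ u w : A, σ u = u ∧ σ w = w ∧ x = u + w * f := by
  obtain ⟨q, hq⟩ := hdvd x
  obtain ⟨h, hh⟩ := h2.exists_left_inv
  have hσh : σ h = h := by
    have h2' : σ h * 2 = 1 := by simpa [map_ofNat] using congrArg σ hh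
    linear_combination h * h2' - σ h * hh
  have hσq : σ q = q := hf (by
    have := congrArg σ hq
    simp only [map_sub, hσ, map_mul, hσf] at this
    linear_combination this + hq)
  refine ⟨h * (x + σ x), h * q, by simp [hσh, hσ, add_comm], by simp [hσh, hσq], ?_⟩
  linear_combination (-x) * hh + h * hq

theorem freeRankVia_eqLocus_subtype (hσ : ∀ a, σ (σ a) = a) (h2 : IsUnit (2 : A))
    (hσf : σ f = -f) (hf : IsLeftRegular f) (hdvd : ∀ a, f ∣ a - σ a) :
    FreeRankVia (RingHom.eqLocus σ (RingHom.id A)).subtype 2 := by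
  refine ⟨![1, f], fun x => ?_⟩
  simp only [Fin.sum_univ_two, Matrix.cons_val_zero, Matrix.cons_val_one, mul_one]
  obtain ⟨u, w, hu, hw, rfl⟩ := exists_add_mul_eq hσ h2 hσf hf hdvd x
  refine ⟨![⟨u, hu⟩, ⟨w, hw⟩], by simp, fun c hc => ?_⟩
  replace hc : u + w * f = c 0 + c 1 * f := hc
  have hc₀ : σ (c 0) = c 0 := (c 0).2
  have hc₁ : σ (c 1) = c 1 := (c 1).2
  have := eq_zero_of_add_mul_eq_zero h2 hσf hf (u := c 0 - u) (w := c 1 - w)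
    (by simp [hc₀, hu]) (by simp [hc₁, hw]) (by linear_combination -hc)
  ext j
  fin_cases j <;> simp [sub_eq_zero.1 this.1, sub_eq_zero.1 this.2]

end Involution

section WeylLine

variable {k : Type} [Field k] {n : ℕ} {L : Set (Fin (n + 1) → k)} {x y : Fin (n + 1) → k}

theorem mem_Hyp_swap_iff {a b : Fin (n + 1)} (hx : ∑ i, x i = 0) :
    x ∈ Hyp k n (swap a b) ↔ x a = x b := by
  refine ⟨fun h => by simpa using (h.2 a).symm, fun h => ⟨hx, fun i => ?_⟩⟩
  rw [swap_apply_def]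
  split_ifs <;> simp_all

theorem comp_mem_Hyp_iff {σ t : Perm (Fin (n + 1))} :
    x ∘ σ ∈ Hyp k n t ↔ x ∈ Hyp k n (σ * t * σ⁻¹) := by
  simp only [Hyp, Set.mem_ofPred_eq, Function.comp_apply, Equiv.sum_comp σ x, Perm.mul_apply]
  refine and_congr_right fun _ => ⟨fun h i => ?_, fun h i => by simpa using h (σ i)⟩
  simpa using h (σ⁻¹ i)

theorem IsWeylLine.sum_eq_zero (hL : IsWeylLine k n L) (hx : x ∈ L) : ∑ i, x i = 0 := by
  obtain ⟨-, T, -, rfl⟩ := hL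
  exact hx.1

theorem IsWeylLine.exists_eq_smul (hL : IsWeylLine k n L) (hx : x ∈ L) (hx0 : x ≠ 0)
    (hy : y ∈ L) : ∃ c : k, y = c • x := by
  obtain ⟨⟨v, -, rfl⟩, -⟩ := hL
  obtain ⟨a, rfl⟩ := hx
  obtain ⟨b, rfl⟩ := hy
  have ha : a ≠ 0 := by rintro rfl; simp at hx0
  exact ⟨b / a, by rw [smul_smul, div_mul_cancel₀ _ ha]⟩

theorem IsWeylLine.mem_of_apply_eq (hL : IsWeylLine k n L) (hx : x ∈ L) (hy : ∑ i, y i = 0)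
    (hxy : ∀ i j, x i = x j → y i = y j) : y ∈ L := by
  obtain ⟨-, T, -, rfl⟩ := hL
  simp only [Set.mem_inter_iff, Set.mem_iInter] at hx ⊢
  exact ⟨hy, fun t ht => ⟨hy, fun i => hxy _ _ ((hx.2 t ht).2 i)⟩⟩

theorem IsWeylLine.image_comp (hL : IsWeylLine k n L) (σ : Perm (Fin (n + 1))) :
    IsWeylLine k n ((· ∘ σ) '' L) := by
  have himage : (· ∘ σ) '' L = (· ∘ ⇑σ⁻¹) ⁻¹' L :=
    congrFun (Set.image_eq_preimage_of_inverse (fun x => by ext; simp) (fun x => by ext; simp)) L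
  obtain ⟨⟨v, hv, hLv⟩, T, hT, hLT⟩ := hL
  rw [himage]
  refine ⟨⟨v ∘ σ, fun h => hv (funext fun i => by simpa using congrFun h (σ⁻¹ i)), ?_⟩,
    (fun t => σ⁻¹ * t * σ) '' T, ?_, ?_⟩
  · ext y
    simp only [hLv, Set.mem_preimage, Set.mem_range]
    refine exists_congr fun c => ⟨fun h => ?_, fun h => ?_⟩
    · ext i; simpa using congrFun h (σ i)
    · ext i; simp [← h]
  · rintro _ ⟨t, ht, rfl⟩
    obtain ⟨a, b, hab, rfl⟩ := hT t ht
    exact ⟨σ⁻¹ a, σ⁻¹ b, σ⁻¹.injective.ne hab, by rw [swap_apply_apply, inv_inv]⟩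
  · ext y
    simp only [hLT, Set.mem_preimage, Set.mem_inter_iff, Set.biInter_image, Set.mem_iInter,
      comp_mem_Hyp_iff, inv_inv, Set.mem_ofPred_eq, Function.comp_apply, Equiv.sum_comp]

theorem IsWeylLine.apply_ne (hL : IsWeylLine k n L) {a b : Fin (n + 1)}
    (hLab : ¬L ⊆ Hyp k n (swap a b)) (hx : x ∈ L) (hx0 : x ≠ 0) : x a ≠ x b := by
  obtain ⟨z, hz, hzab⟩ := Set.not_subset.1 hLab
  obtain ⟨c, rfl⟩ := hL.exists_eq_smul hx hx0 hz
  intro h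
  exact hzab ((mem_Hyp_swap_iff (hL.sum_eq_zero hz)).2 (by simp [h]))

theorem IsWeylLine.apply_eq_of_ne_of_ne [CharZero k] (hL : IsWeylLine k n L) (hx : x ∈ L)
    {a b c : Fin (n + 1)} (hab : x a ≠ x b) (hbc : x b ≠ x c) : x a = x c := by
  -- `x ↦ x ^ 2`, recentred, is again on `L`, so every `x i` is a root of one quadratic
  set μ := (∑ i, x i ^ 2) / (n + 1)
  have hsq : (fun i => x i ^ 2 - μ) ∈ L := by
    refine hL.mem_of_apply_eq hx ?_ fun i j h => by simp [h]
    rw [Finset.sum_sub_distrib, Finset.sum_const, Finset.card_univ, Fintype.card_fin,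
      nsmul_eq_mul, Nat.cast_add_one, mul_div_cancel₀ _ (Nat.cast_add_one_ne_zero n), sub_self]
  obtain ⟨e, he⟩ := hL.exists_eq_smul hx (fun h => hab (by simp [h])) hsq
  have hsum : ∀ i j, x i ≠ x j → x i + x j = e := fun i j hij =>
    mul_left_cancel₀ (sub_ne_zero.2 hij) (by
      linear_combination (by simpa using congrFun he i : x i ^ 2 - μ = e * x i) -
        (by simpa using congrFun he j : x j ^ 2 - μ = e * x j))
  linear_combination hsum a b hab - hsum b c hbc

end WeylLine

section Vt

variable {k : Type} [Field k] {n : ℕ} {x : Fin (n + 1) → k} {a b c : Fin (n + 1)}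
  {t : Perm (Fin (n + 1))}

theorem mem_Vt_iff : x ∈ Vt k n t ↔ ∃ L, IsWeylLine k n L ∧ ¬L ⊆ Hyp k n t ∧ x ∈ L := by
  simp [Vt, and_assoc]

theorem IsWeylLine.subset_Vt {L : Set (Fin (n + 1) → k)} (hL : IsWeylLine k n L)
    (hLt : ¬L ⊆ Hyp k n t) : L ⊆ Vt k n t :=
  fun _ hx => mem_Vt_iff.2 ⟨L, hL, hLt, hx⟩

theorem comp_mem_Vt (hx : x ∈ Vt k n t) : x ∘ t ∈ Vt k n t := by
  obtain ⟨L, hL, hLt, hxL⟩ := mem_Vt_iff.1 hx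
  refine (hL.image_comp t).subset_Vt (fun h => hLt fun y hy => ?_) ⟨x, hxL, rfl⟩
  simpa using comp_mem_Hyp_iff.1 (h ⟨y, hy, rfl⟩)

theorem apply_ne_of_mem_Vt (hx : x ∈ Vt k n (swap a b)) (hx0 : x ≠ 0) : x a ≠ x b := by
  obtain ⟨L, hL, hLab, hxL⟩ := mem_Vt_iff.1 hx
  exact hL.apply_ne hLab hxL hx0

theorem apply_eq_of_mem_Vt_of_mem_Vt [CharZero k] (hab : x ∈ Vt k n (swap a b))
    (hbc : x ∈ Vt k n (swap b c)) : x a = x c := by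
  rcases eq_or_ne x 0 with rfl | hx0
  · rfl
  obtain ⟨L, hL, -, hxL⟩ := mem_Vt_iff.1 hab
  exact hL.apply_eq_of_ne_of_ne hxL (apply_ne_of_mem_Vt hab hx0) (apply_ne_of_mem_Vt hbc hx0)

theorem mem_Vt_or_comp_mem_Vt (hac : a ≠ c) (hbc : b ≠ c) (hx : x ∈ Vt k n (swap a b)) :
    x ∈ Vt k n (swap b c) ∨ x ∘ swap a b ∈ Vt k n (swap b c) := by
  obtain ⟨L, hL, hLab, hxL⟩ := mem_Vt_iff.1 hx
  by_cases hLbc : L ⊆ Hyp k n (swap b c)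
  · right
    obtain ⟨z, hz, hzab⟩ := Set.not_subset.1 hLab
    rw [mem_Hyp_swap_iff (hL.sum_eq_zero hz)] at hzab
    have hzbc : z b = z c := (mem_Hyp_swap_iff (hL.sum_eq_zero hz)).1 (hLbc hz)
    refine (hL.image_comp _).subset_Vt (fun h => hzab ?_) ⟨x, hxL, rfl⟩
    have := (mem_Hyp_swap_iff ((hL.image_comp _).sum_eq_zero ⟨z, hz, rfl⟩)).1 (h ⟨z, hz, rfl⟩)
    simpa [swap_apply_of_ne_of_ne hac.symm hbc.symm, ← hzbc] using this
  · exact Or.inl (hL.subset_Vt hLbc hxL)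

theorem eval_smul_eq_zero_of_ne_zero [Infinite k] {σ : Type} (p : MvPolynomial σ k) (v : σ → k)
    (h : ∀ c : k, c ≠ 0 → eval (c • v) p = 0) (c : k) : eval (c • v) p = 0 := by
  let P : Polynomial k := eval₂ Polynomial.C (fun j => Polynomial.C (v j) * Polynomial.X) p
  have hP : ∀ c, P.eval c = eval (c • v) p := fun c => by
    have hC : (Polynomial.evalRingHom c).comp Polynomial.C = RingHom.id k :=
      RingHom.ext fun _ => Polynomial.eval_C
    simp only [P, polynomial_eval_eval₂, hC, Polynomial.eval_mul, Polynomial.eval_C,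
      Polynomial.eval_X, eval, coe_eval₂Hom, mul_comm]
    rfl
  have : P * Polynomial.X = 0 := Polynomial.funext fun c => by
    rcases eq_or_ne c 0 with rfl | hc
    · simp
    · simp [hP, h c hc]
  rw [← hP, mul_eq_zero.1 this |>.resolve_right Polynomial.X_ne_zero, Polynomial.eval_zero]

theorem eval_eq_zero_of_mul_sub_eq_zero [CharZero k] {w : MvPolynomial (Fin (n + 1)) k}
    (hw : ∀ x ∈ Vt k n (swap a b), eval x w * (x a - x b) = 0) :
    ∀ x ∈ Vt k n (swap a b), eval x w = 0 := by
  intro x hx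
  obtain ⟨L, hL, hLab, hxL⟩ := mem_Vt_iff.1 hx
  have hLV := hL.subset_Vt hLab
  obtain ⟨⟨v, hv, rfl⟩, -⟩ := hL
  obtain ⟨c, rfl⟩ := hxL
  refine eval_smul_eq_zero_of_ne_zero w v (fun d hd => ?_) c
  have hdv := hLV ⟨d, rfl⟩
  exact (mul_eq_zero.1 (hw _ hdv)).resolve_right
    (sub_ne_zero.2 (apply_ne_of_mem_Vt hdv (smul_ne_zero hd hv)))

end Vt

theorem X_sub_X_dvd_sub_rename_swap {R σ : Type} [CommRing R] [DecidableEq σ] (a b : σ)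
    (p : MvPolynomial σ R) : X a - X b ∣ p - rename (swap a b) p := by
  let q := Ideal.Quotient.mkₐ R (Ideal.span {(X a - X b : MvPolynomial σ R)})
  have hab : q (X a) = q (X b) :=
    (Ideal.Quotient.mk_eq_mk_iff_sub_mem _ _).2 (Ideal.mem_span_singleton_self _)
  have hq : q.comp (rename (swap a b)) = q := algHom_ext fun j => by
    rw [AlgHom.comp_apply, rename_X, swap_apply_def]
    split_ifs with ha hb
    · rw [ha, hab]
    · rw [hb, hab]
    · rfl
  rw [← Ideal.mem_span_singleton, ← Ideal.Quotient.mk_eq_mk_iff_sub_mem]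
  exact (AlgHom.congr_fun hq p).symm

section CoordinateRing

variable {k : Type} [Field k] {n : ℕ} {X Y : Set (Fin (n + 1) → k)}

noncomputable def O.mk (X : Set (Fin (n + 1) → k)) : MvPolynomial (Fin (n + 1)) k →+* O k n X :=
  Ideal.Quotient.mk _

theorem O.mk_surjective : Function.Surjective (O.mk X) := Ideal.Quotient.mk_surjective

theorem O.mk_eq_zero_iff {p : MvPolynomial (Fin (n + 1)) k} :
    O.mk X p = 0 ↔ ∀ x ∈ X, eval x p = 0 :=
  Ideal.Quotient.eq_zero_iff_mem.trans mem_vanishingIdeal_iff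

theorem O.mk_eq_mk_iff {p q : MvPolynomial (Fin (n + 1)) k} :
    O.mk X p = O.mk X q ↔ ∀ x ∈ X, eval x p = eval x q := by
  rw [← sub_eq_zero, ← map_sub, O.mk_eq_zero_iff]
  simp only [map_sub, sub_eq_zero]

theorem res_mk [CharZero k] (h : X ⊆ Y) (p : MvPolynomial (Fin (n + 1)) k) :
    res k n h (O.mk Y p) = O.mk X p :=
  Ideal.Quotient.factor_mk _ _

theorem permO_mk {σ : Perm (Fin (n + 1))} (hX : ∀ x ∈ X, x ∘ σ ∈ X)
    (p : MvPolynomial (Fin (n + 1)) k) : permO k n σ X (O.mk X p) = O.mk X (rename σ p) := by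
  have h : permO k n σ X = _ := dif_pos hX
  rw [h]
  rfl

theorem O.mk_mem_eqLocus_permO_Vt_iff {t : Perm (Fin (n + 1))}
    {p : MvPolynomial (Fin (n + 1)) k} :
    O.mk _ p ∈ RingHom.eqLocus (permO k n t (Vt k n t)) (RingHom.id _) ↔
      ∀ x ∈ Vt k n t, eval (x ∘ t) p = eval x p := by
  change permO k n t _ (O.mk _ p) = O.mk _ p ↔ _
  simp [permO_mk (fun _ => comp_mem_Vt), O.mk_eq_mk_iff, eval_rename]

theorem freeRankVia_eqLocus_permO_Vt [CharZero k] (a b : Fin (n + 1)) :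
    FreeRankVia (RingHom.eqLocus (permO k n (swap a b) (Vt k n (swap a b)))
      (RingHom.id _)).subtype 2 := by
  set V := Vt k n (swap a b)
  have hperm : ∀ p, permO k n (swap a b) V (O.mk V p) = O.mk V (rename (swap a b) p) :=
    permO_mk fun _ => comp_mem_Vt
  refine freeRankVia_eqLocus_subtype (f := O.mk V (X a - X b)) (fun g => ?_) ?_ ?_ ?_ (fun g => ?_)
  · obtain ⟨p, rfl⟩ := O.mk_surjective g
    simp [hperm, rename_rename, ← Perm.coe_mul]
  · simpa only [map_ofNat] using
      ((isUnit_iff_ne_zero.2 (two_ne_zero : (2 : k) ≠ 0)).map C).map (O.mk V)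
  · simp [hperm]
  · refine isLeftRegular_iff_right_eq_zero_of_mul.2 fun g hg => ?_
    obtain ⟨w, rfl⟩ := O.mk_surjective g
    rw [← map_mul, O.mk_eq_zero_iff] at hg
    exact O.mk_eq_zero_iff.2 <| eval_eq_zero_of_mul_sub_eq_zero fun x hx => by
      simpa [mul_comm] using hg x hx
  · obtain ⟨p, rfl⟩ := O.mk_surjective g
    rw [hperm, ← map_sub]
    exact map_dvd _ (X_sub_X_dvd_sub_rename_swap a b p)

end CoordinateRing

section Restriction

variable {k : Type} [Field k] [CharZero k] {n : ℕ} {a b c : Fin (n + 1)}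

theorem bijective_res_comp_subtype (hac : a ≠ c) (hbc : b ≠ c) {t : Perm (Fin (n + 1))}
    (ht : t = swap a b) {Y : Set (Fin (n + 1) → k)} (hY : Y ⊆ Vt k n t)
    (hcover : ∀ x ∈ Vt k n t, x ∈ Y ∨ x ∘ t ∈ Y) (hYac : ∀ x ∈ Y, x a = x c) :
    Function.Bijective ((res k n hY).comp
      (RingHom.eqLocus (permO k n t (Vt k n t)) (RingHom.id _)).subtype) := by
  refine ⟨(injective_iff_map_eq_zero _).2 ?_, fun y => ?_⟩
  · rintro ⟨g, hg⟩ h0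
    obtain ⟨p, rfl⟩ := O.mk_surjective g
    have hpY : ∀ x ∈ Y, eval x p = 0 := O.mk_eq_zero_iff.1 (by simpa [res_mk] using h0)
    refine Subtype.ext (O.mk_eq_zero_iff.2 fun x hx => ?_)
    rcases hcover x hx with h | h
    · exact hpY x h
    · rw [← O.mk_mem_eqLocus_permO_Vt_iff.1 hg x hx]
      exact hpY _ h
  · obtain ⟨p, rfl⟩ := O.mk_surjective y
    subst ht
    -- substituting `X a ↦ X c` and `X b ↦ X a + X b - X c` makes `p` symmetric in `a, b`
    -- without changing it on `Y`, where `x a = x c`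
    let g : Fin (n + 1) → MvPolynomial (Fin (n + 1)) k := fun j =>
      if j = a then X c else if j = b then X a + X b - X c else X j
    have hg : ∀ j, rename (swap a b) (g j) = g j := fun j => by
      simp only [g]
      split_ifs with hja hjb
      · simp [swap_apply_of_ne_of_ne hac.symm hbc.symm]
      · simp [swap_apply_of_ne_of_ne hac.symm hbc.symm, add_comm]
      · simp [swap_apply_of_ne_of_ne hja hjb]
    have hgY : ∀ x ∈ Y, (fun j => eval x (g j)) = x := fun x hx => funext fun j => by
      simp only [g]
      split_ifs with hja hjb
      · simp [hja, hYac x hx]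
      · simp [hjb, hYac x hx]
      · simp
    refine ⟨⟨O.mk _ (bind₁ g p), O.mk_mem_eqLocus_permO_Vt_iff.2 fun x _ => ?_⟩, ?_⟩
    · rw [← eval_rename, rename_bind₁]
      simp only [hg]
    · refine (res_mk hY _).trans (O.mk_eq_mk_iff.2 fun x hx => ?_)
      rw [show eval x (bind₁ g p) = eval (fun j => eval x (g j)) p from
        eval₂Hom_bind₁ _ x g p, hgY x hx]

theorem bijective_res_inter_left (hac : a ≠ c) (hbc : b ≠ c) :
    Function.Bijective ((res k n (Set.inter_subset_left :
        Vt k n (swap a b) ∩ Vt k n (swap b c) ⊆ Vt k n (swap a b))).comp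
      (RingHom.eqLocus (permO k n (swap a b) (Vt k n (swap a b))) (RingHom.id _)).subtype) :=
  bijective_res_comp_subtype hac hbc rfl _
    (fun _ hx => (mem_Vt_or_comp_mem_Vt hac hbc hx).imp (⟨hx, ·⟩) (⟨comp_mem_Vt hx, ·⟩))
    (fun _ hx => apply_eq_of_mem_Vt_of_mem_Vt hx.1 hx.2)

theorem bijective_res_inter_right (hab : a ≠ b) (hac : a ≠ c) :
    Function.Bijective ((res k n (Set.inter_subset_right :
        Vt k n (swap a b) ∩ Vt k n (swap b c) ⊆ Vt k n (swap b c))).comp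
      (RingHom.eqLocus (permO k n (swap b c) (Vt k n (swap b c))) (RingHom.id _)).subtype) := by
  refine bijective_res_comp_subtype hac.symm hab.symm (swap_comm b c) _ (fun x hx => ?_)
    (fun _ hx => (apply_eq_of_mem_Vt_of_mem_Vt hx.1 hx.2).symm)
  rw [swap_comm b c] at hx ⊢
  rw [swap_comm a b]
  exact (mem_Vt_or_comp_mem_Vt hac.symm hab.symm hx).imp (⟨·, hx⟩) (⟨·, comp_mem_Vt hx⟩)

end Restriction

variable (k : Type) [Field k] [CharZero k] (n : ℕ)

/-- (0-indexed, `i + 1 < n`.)  The bimodule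
`B_{i,i+1} := O(V_i) ⊗_{O(V_i)^{s_i}} O(V_i ∩ V_{i+1}) ⊗_{O(V_{i+1})^{s_{i+1}}} O(V_{i+1})`
is free of rank 2 as a left `O(V_i)`-module and free of rank 2 as a right
`O(V_{i+1})`-module; as an `(O(Z), O(Z))`-bimodule its left annihilator is the kernel of
`O(Z) → O(V_i)` and its right annihilator is the kernel of `O(Z) → O(V_{i+1})`. -/
theorem Bi_adjacent_free_and_annihilators (i : ℕ) (hi : i + 1 < n) :
    letI M := O k n (Vi k n i ∩ Vi k n (i + 1))
    letI : Algebra (fixedO k n i) M :=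
      ((res k n (Set.inter_subset_left : Vi k n i ∩ Vi k n (i + 1) ⊆ Vi k n i)).comp
        (fixedO k n i).subtype).toAlgebra
    letI : Algebra (fixedO k n (i + 1)) M :=
      ((res k n (Set.inter_subset_right :
          Vi k n i ∩ Vi k n (i + 1) ⊆ Vi k n (i + 1))).comp
        (fixedO k n (i + 1)).subtype).toAlgebra
    letI T1 := O k n (Vi k n i) ⊗[fixedO k n i] M
    letI : Algebra (fixedO k n (i + 1)) T1 :=
      ((Algebra.TensorProduct.includeRight.toRingHom :
          M →+* T1).comp (algebraMap (fixedO k n (i + 1)) M)).toAlgebra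
    letI B := T1 ⊗[fixedO k n (i + 1)] O k n (Vi k n (i + 1))
    letI ℓ : O k n (Vi k n i) →+* B :=
      (Algebra.TensorProduct.includeLeftRingHom : T1 →+* B).comp
        (Algebra.TensorProduct.includeLeftRingHom : O k n (Vi k n i) →+* T1)
    letI r : O k n (Vi k n (i + 1)) →+* B :=
      Algebra.TensorProduct.includeRight.toRingHom
    FreeRankVia ℓ 2 ∧ FreeRankVia r 2 ∧
    {a : O k n (ZZ k n) | ∀ x : B, ℓ (res k n (Vi_subset_ZZ k n i) a) * x = 0} =
      {a : O k n (ZZ k n) | res k n (Vi_subset_ZZ k n i) a = 0} ∧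
    {a : O k n (ZZ k n) | ∀ x : B, r (res k n (Vi_subset_ZZ k n (i + 1)) a) * x = 0} =
      {a : O k n (ZZ k n) | res k n (Vi_subset_ZZ k n (i + 1)) a = 0} := by
  open Fin.NatCast in
  have hdistinct : ∀ j l : ℕ, j < l → l ≤ i + 2 → (j : Fin (n + 1)) ≠ l := fun j l hjl hl h => by
    rw [Fin.ext_iff, Fin.val_natCast, Fin.val_natCast, Nat.mod_eq_of_lt (by omega),
      Nat.mod_eq_of_lt (by omega)] at h
    omega
  let M := O k n (Vi k n i ∩ Vi k n (i + 1))
  let _ : Algebra (fixedO k n i) M :=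
    ((res k n Set.inter_subset_left).comp (fixedO k n i).subtype).toAlgebra
  let _ : Algebra (fixedO k n (i + 1)) M :=
    ((res k n Set.inter_subset_right).comp (fixedO k n (i + 1)).subtype).toAlgebra
  let _ : Algebra (fixedO k n (i + 1)) (O k n (Vi k n i) ⊗[fixedO k n i] M) :=
    (Algebra.TensorProduct.includeRight.toRingHom.comp
      (algebraMap (fixedO k n (i + 1)) M)).toAlgebra
  have hS : FreeRankVia (algebraMap (fixedO k n i) (O k n (Vi k n i))) 2 :=
    freeRankVia_eqLocus_permO_Vt _ _
  have hS' : FreeRankVia (algebraMap (fixedO k n (i + 1)) (O k n (Vi k n (i + 1)))) 2 :=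
    freeRankVia_eqLocus_permO_Vt _ _
  have hM : Function.Bijective (algebraMap (fixedO k n i) M) :=
    bijective_res_inter_left (hdistinct _ _ (by omega) (by omega))
      (hdistinct _ _ (by omega) (by omega))
  have hM' : Function.Bijective (algebraMap (fixedO k n (i + 1)) M) :=
    bijective_res_inter_right (hdistinct _ _ (by omega) (by omega))
      (hdistinct _ _ (by omega) (by omega))
  obtain ⟨hℓ, hr⟩ := freeRankVia_includeLeft_includeRight rfl hM hM' hS hS'
  exact ⟨hℓ, hr, hℓ.setOf_forall_mul_eq_zero two_pos _, hr.setOf_forall_mul_eq_zero two_pos _⟩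

end TLpaper
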